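/- arXiv:1404.2183 — 2 statements merged into one kernel-verified Lean document; each statement's English description precedes it below -/
import Mathlib

section
/- For every integer n ≥ 3: (i) the set {t ∈ ℕ : t ≤ ⌊‖n−1‖/2⌋ and E(t) + E(‖n−1‖ − t) ≥ n} is nonempty, so t_e(n) and kMax(n) are well defined; and (ii) 1 ≤ kMax(n) ≤ (n/2)·(1 − √(1 − (4/n²)·3^(‖n−1‖/3))), where the square root is the real square root and 3^(‖n−1‖/3) is a real power. -/
/-- `HasCpx n k` means the positive integer `n` can be written using exactly `k` ones,
additions and multiplications. -/
inductive HasCpx : ℕ → ℕ → Prop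
  | one : HasCpx 1 1
  | add {a b j k : ℕ} : HasCpx a j → HasCpx b k → HasCpx (a + b) (j + k)
  | mul {a b j k : ℕ} : HasCpx a j → HasCpx b k → HasCpx (a * b) (j + k)

/-- The integer complexity `‖n‖`: the least number of 1's needed to write `n` using
only `+` and `*`.  By convention (`sInf ∅ = 0` in `ℕ`) we have `cpx 0 = 0`. -/
noncomputable def cpx (n : ℕ) : ℕ := sInf {k | HasCpx n k}

/-- The function `E`: `E k` is the largest integer of complexity `k` (OEIS A000792),
with `E 0 = 1`.  It satisfies `E 0 = E 1 = 1`, `E 2 = 2`, and for `j ≥ 1`: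
`E (3j) = 3^j`, `E (3j+1) = 4·3^(j-1)`, `E (3j+2) = 2·3^j`. -/
def E : ℕ → ℕ
  | 0 => 1
  | 1 => 1
  | 2 => 2
  | 3 => 3
  | 4 => 4
  | (n + 5) => 3 * E (n + 2)

/-- `te n` is the largest integer `t` with `0 ≤ t ≤ ⌊‖n-1‖/2⌋` such that
`E t + E (‖n-1‖ - t) ≥ n` (as a supremum in `ℕ`). -/
noncomputable def te (n : ℕ) : ℕ :=
  sSup {t : ℕ | t ≤ cpx (n - 1) / 2 ∧ n ≤ E t + E (cpx (n - 1) - t)}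

/-- `kMax n = E (te n)`. -/
noncomputable def kMax (n : ℕ) : ℕ := E (te n)


lemma E_add5 (j : ℕ) : E (j + 5) = 3 * E (j + 2) := rfl

lemma E_pos : ∀ k, 1 ≤ E k
  | 0 => le_refl _
  | 1 => le_refl _
  | 2 => by decide
  | 3 => by decide
  | 4 => by decide
  | (j + 5) => by rw [E_add5]; have := E_pos (j + 2); omega

lemma E_succ_le : ∀ k, E k ≤ E (k + 1)
  | 0 => by decide
  | 1 => by decide
  | 2 => by decide
  | 3 => by decide
  | 4 => by decide
  | (j + 5) => by
      have h1 : E (j + 6) = 3 * E (j + 3) := E_add5 (j + 1)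
      rw [E_add5, h1]
      have h := E_succ_le (j + 2)
      rw [show j + 2 + 1 = j + 3 from rfl] at h
      omega

lemma E_mono : Monotone E := monotone_nat_of_le_succ E_succ_le

lemma two_E : ∀ k, 2 * E k ≤ E (k + 2)
  | 0 => by decide
  | 1 => by decide
  | 2 => by decide
  | 3 => by decide
  | 4 => by decide
  | (j + 5) => by
      have h1 : E (j + 7) = 3 * E (j + 4) := E_add5 (j + 2)
      rw [E_add5, h1]
      have h := two_E (j + 2)
      rw [show j + 2 + 2 = j + 4 from rfl] at h
      omega

lemma three_E : ∀ k, 3 * E k ≤ E (k + 3)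
  | 0 => by decide
  | 1 => by decide
  | 2 => by decide
  | 3 => by decide
  | 4 => by decide
  | (j + 5) => by
      have h1 : E (j + 8) = 3 * E (j + 5) := E_add5 (j + 3)
      rw [E_add5, h1, E_add5]

lemma one_add_E : ∀ k, 1 ≤ k → 1 + E k ≤ E (k + 1)
  | 0, h => by omega
  | 1, _ => by decide
  | 2, _ => by decide
  | 3, _ => by decide
  | 4, _ => by decide
  | (j + 5), _ => by
      have h1 : E (j + 6) = 3 * E (j + 3) := E_add5 (j + 1)
      rw [E_add5, h1]
      have h := one_add_E (j + 2) (by omega)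
      rw [show j + 2 + 1 = j + 3 from rfl] at h
      omega

lemma E_mul : ∀ j k, E j * E k ≤ E (j + k)
  | 0, k => by rw [show E 0 = 1 from rfl, one_mul, Nat.zero_add]
  | 1, k => by
      rw [show E 1 = 1 from rfl, one_mul, Nat.add_comm]
      exact E_mono (by omega)
  | 2, k => by
      rw [show E 2 = 2 from rfl, Nat.add_comm]
      exact two_E k
  | 3, k => by
      rw [show E 3 = 3 from rfl, Nat.add_comm]
      exact three_E k
  | 4, k => by
      rw [show E 4 = 4 from rfl, Nat.add_comm, show k + 4 = k + 2 + 2 from rfl]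
      have h1 := two_E k
      have h2 := two_E (k + 2)
      omega
  | (j + 5), k => by
      rw [E_add5]
      have h1 := E_mul (j + 2) k
      have h2 := three_E (j + 2 + k)
      have h3 : j + 2 + k + 3 = j + 5 + k := by omega
      rw [h3] at h2
      calc 3 * E (j + 2) * E k = 3 * (E (j + 2) * E k) := by ring
        _ ≤ 3 * E (j + 2 + k) := by omega
        _ ≤ E (j + 5 + k) := h2

lemma E_two_le {k : ℕ} (h : 2 ≤ k) : 2 ≤ E k := by
  have h1 : E 2 ≤ E k := E_mono h
  have h2 : E 2 = 2 := rfl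
  omega

lemma E_add : ∀ j k, 1 ≤ j → 1 ≤ k → E j + E k ≤ E (j + k) := by
  intro j k hj hk
  rcases eq_or_lt_of_le hj with h | h
  · rw [← h, show E 1 = 1 from rfl]
    rw [Nat.add_comm 1 k]
    exact one_add_E k hk
  · rcases eq_or_lt_of_le hk with h2 | h2
    · rw [← h2, show E 1 = 1 from rfl]
      have h3 := one_add_E j hj
      omega
    · have ha := E_two_le h
      have hb := E_two_le h2
      have hm := E_mul j k
      nlinarith [E_pos j, E_pos k]

lemma E_cubed : ∀ k, (E k) ^ 3 ≤ 3 ^ k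
  | 0 => by decide
  | 1 => by decide
  | 2 => by decide
  | 3 => by decide
  | 4 => by decide
  | (j + 5) => by
      rw [E_add5]
      have := E_cubed (j + 2)
      calc (3 * E (j + 2)) ^ 3 = 27 * (E (j + 2)) ^ 3 := by ring
        _ ≤ 27 * 3 ^ (j + 2) := by omega
        _ = 3 ^ (j + 5) := by ring


lemma hasCpx_self : ∀ m, 1 ≤ m → HasCpx m m := by
  intro m
  induction m with
  | zero => omega
  | succ k ih =>
    intro _
    rcases Nat.eq_zero_or_pos k with h | h
    · subst h; exact HasCpx.one
    · exact HasCpx.add (ih h) HasCpx.one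

lemma cpx_spec {m : ℕ} (h : 1 ≤ m) : HasCpx m (cpx m) :=
  Nat.sInf_mem ⟨m, hasCpx_self m h⟩

lemma cpx_le {m k : ℕ} (h : HasCpx m k) : cpx m ≤ k := Nat.sInf_le h

lemma hasCpx_pos {m k : ℕ} (h : HasCpx m k) : 1 ≤ m := by
  induction h with
  | one => exact le_refl _
  | add _ _ iha ihb => omega
  | mul _ _ iha ihb => exact Nat.one_le_iff_ne_zero.mpr (by positivity)

lemma cpx_mul_le {a b : ℕ} (ha : 1 ≤ a) (hb : 1 ≤ b) : cpx (a * b) ≤ cpx a + cpx b :=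
  cpx_le (HasCpx.mul (cpx_spec ha) (cpx_spec hb))

lemma cpx_add_le {a b : ℕ} (ha : 1 ≤ a) (hb : 1 ≤ b) : cpx (a + b) ≤ cpx a + cpx b :=
  cpx_le (HasCpx.add (cpx_spec ha) (cpx_spec hb))

lemma cpx_one : cpx 1 ≤ 1 := cpx_le HasCpx.one
lemma cpx_two : cpx 2 ≤ 2 := cpx_le (HasCpx.add HasCpx.one HasCpx.one)
lemma cpx_three : cpx 3 ≤ 3 := cpx_le (HasCpx.add (HasCpx.add HasCpx.one HasCpx.one) HasCpx.one)

lemma nine_pow_aux (q : ℕ) (hq : 2 ≤ q) : 9 * (q + 1) ^ 6 ≤ (2 * q + 1) ^ 6 := by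
  have h5 : 5 * (q + 1) ≤ 3 * (2 * q + 1) := by omega
  have h6 : (5 * (q + 1)) ^ 6 ≤ (3 * (2 * q + 1)) ^ 6 := Nat.pow_le_pow_left h5 6
  have he1 : (5 * (q + 1)) ^ 6 = 15625 * (q + 1) ^ 6 := by ring
  have he2 : (3 * (2 * q + 1)) ^ 6 = 729 * (2 * q + 1) ^ 6 := by ring
  rw [he1, he2] at h6
  omega

lemma cpx_bound : ∀ m, 2 ≤ m → 64 * 3 ^ cpx m ≤ (m + 1) ^ 6 := by
  intro m
  induction m using Nat.strong_induction_on with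
  | _ m ih =>
    intro hm
    rcases lt_or_ge m 4 with h4 | h4
    · interval_cases m
      · calc 64 * 3 ^ cpx 2 ≤ 64 * 3 ^ 2 := by
              exact Nat.mul_le_mul_left _ (Nat.pow_le_pow_right (by norm_num) cpx_two)
          _ ≤ 3 ^ 6 := by norm_num
      · calc 64 * 3 ^ cpx 3 ≤ 64 * 3 ^ 3 := by
              exact Nat.mul_le_mul_left _ (Nat.pow_le_pow_right (by norm_num) cpx_three)
          _ ≤ 4 ^ 6 := by norm_num
    · set q := m / 2 with hq
      have hq2 : 2 ≤ q := by omega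
      have hqm : q < m := by omega
      have hihq := ih q hqm hq2
      have hcq : cpx (q * 2) ≤ cpx q + 2 := le_trans (cpx_mul_le (by omega) (by omega))
        (by have := cpx_two; omega)
      rcases Nat.even_or_odd m with he | ho
      · have hme : m = q * 2 := by
          obtain ⟨r, hr⟩ := he; omega
        have hc : cpx m ≤ cpx q + 2 := hme ▸ hcq
        calc 64 * 3 ^ cpx m ≤ 64 * 3 ^ (cpx q + 2) :=
              Nat.mul_le_mul_left _ (Nat.pow_le_pow_right (by norm_num) hc)
          _ = 9 * (64 * 3 ^ cpx q) := by ring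
          _ ≤ 9 * (q + 1) ^ 6 := Nat.mul_le_mul_left _ hihq
          _ ≤ (2 * q + 1) ^ 6 := nine_pow_aux q hq2
          _ = (m + 1) ^ 6 := by rw [hme]; ring_nf
      · have hmo : m = q * 2 + 1 := by
          obtain ⟨r, hr⟩ := ho; omega
        have hc : cpx m ≤ cpx q + 3 := by
          rw [hmo]
          have h1 : cpx (q * 2 + 1) ≤ cpx (q * 2) + cpx 1 := cpx_add_le (by omega) (le_refl _)
          have h2 := cpx_one
          omega
        calc 64 * 3 ^ cpx m ≤ 64 * 3 ^ (cpx q + 3) :=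
              Nat.mul_le_mul_left _ (Nat.pow_le_pow_right (by norm_num) hc)
          _ = 27 * (64 * 3 ^ cpx q) := by ring
          _ ≤ 27 * (q + 1) ^ 6 := Nat.mul_le_mul_left _ hihq
          _ ≤ 64 * (q + 1) ^ 6 := Nat.mul_le_mul_right _ (by norm_num)
          _ = (2 * q + 2) ^ 6 := by ring
          _ = (m + 1) ^ 6 := by rw [hmo]; ring_nf


lemma hasCpx_k_pos {m k : ℕ} (h : HasCpx m k) : 1 ≤ k := by
  induction h with
  | one => exact le_refl _
  | add _ _ iha ihb => omega
  | mul _ _ iha ihb => omega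

lemma le_E_of_hasCpx {m k : ℕ} (h : HasCpx m k) : m ≤ E k := by
  induction h with
  | one => exact le_refl _
  | add ha hb iha ihb =>
      exact le_trans (Nat.add_le_add iha ihb)
        (E_add _ _ (hasCpx_k_pos ha) (hasCpx_k_pos hb))
  | mul ha hb iha ihb =>
      exact le_trans (Nat.mul_le_mul iha ihb) (E_mul _ _)

lemma le_E_cpx (m : ℕ) (h : 1 ≤ m) : m ≤ E (cpx m) :=
  le_E_of_hasCpx (Nat.sInf_mem ⟨m, hasCpx_self m h⟩)


/-- For `n ≥ 3`: the set defining `te n` is nonempty (so `te n` and `kMax n` are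
well defined), and `1 ≤ kMax n ≤ (n/2)·(1 - √(1 - (4/n²)·3^(‖n-1‖/3)))`. -/
theorem kMax_well_defined_and_bound (n : ℕ) (hn : 3 ≤ n) :
    {t : ℕ | t ≤ cpx (n - 1) / 2 ∧ n ≤ E t + E (cpx (n - 1) - t)}.Nonempty ∧
    1 ≤ kMax n ∧
    (kMax n : ℝ) ≤ ((n : ℝ) / 2) *
      (1 - Real.sqrt (1 - 4 / (n : ℝ) ^ 2 * (3 : ℝ) ^ ((cpx (n - 1) : ℝ) / 3))) := by
  have hm2 : 2 ≤ n - 1 := by omega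
  have hmEc : n - 1 ≤ E (cpx (n - 1)) := le_E_cpx _ (by omega)
  set c : ℕ := cpx (n - 1) with hcdef
  set S : Set ℕ := {t : ℕ | t ≤ c / 2 ∧ n ≤ E t + E (c - t)} with hSdef
  have h0 : 0 ∈ S := by
    constructor
    · exact Nat.zero_le _
    · show n ≤ E 0 + E (c - 0)
      rw [Nat.sub_zero, show E 0 = 1 from rfl]
      omega
  have hne : S.Nonempty := ⟨0, h0⟩
  have hbdd : BddAbove S := ⟨c / 2, fun t ht => ht.1⟩
  have hteS : te n ∈ S := by
    have : te n = sSup S := rfl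
    rw [this]
    exact Nat.sSup_mem hne hbdd
  obtain ⟨ht1, ht2⟩ := hteS
  set t : ℕ := te n with htdef
  refine ⟨hne, E_pos _, ?_⟩
  -- basic facts
  have htc : t ≤ c := le_trans ht1 (Nat.div_le_self _ _)
  have htc2 : t ≤ c - t := by omega
  have hxy : E t ≤ E (c - t) := E_mono htc2
  have hmul : E t * E (c - t) ≤ E c := by
    have h := E_mul t (c - t)
    rwa [show t + (c - t) = c by omega] at h
  -- real setup
  have hNpos : (0 : ℝ) < n := by exact_mod_cast (by omega : 0 < n)
  set P : ℝ := (3 : ℝ) ^ ((c : ℝ) / 3) with hPdef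
  have hPpos : 0 < P := Real.rpow_pos_of_pos (by norm_num) _
  have hP3 : P ^ 3 = (3 : ℝ) ^ (c : ℕ) := by
    rw [hPdef, ← Real.rpow_natCast ((3:ℝ) ^ ((c:ℝ)/3)) 3, ← Real.rpow_mul (by norm_num)]
    rw [show ((c : ℝ) / 3) * ((3:ℕ):ℝ) = (c : ℝ) by push_cast; ring]
    exact Real.rpow_natCast 3 c
  have h64 : (64 : ℝ) * (3 : ℝ) ^ (c : ℕ) ≤ (n : ℝ) ^ 6 := by
    have h := cpx_bound (n - 1) hm2
    rw [show n - 1 + 1 = n by omega] at h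
    exact_mod_cast h
  have h4P : 4 * P ≤ (n : ℝ) ^ 2 := by
    have h1 : (4 * P) ^ 3 ≤ ((n : ℝ) ^ 2) ^ 3 := by
      calc (4 * P) ^ 3 = 64 * P ^ 3 := by ring
        _ = 64 * (3 : ℝ) ^ (c : ℕ) := by rw [hP3]
        _ ≤ (n : ℝ) ^ 6 := h64
        _ = ((n : ℝ) ^ 2) ^ 3 := by ring
    exact le_of_pow_le_pow_left₀ (by norm_num) (by positivity) h1
  have hEcP : (E c : ℝ) ≤ P := by
    refine le_of_pow_le_pow_left₀ (n := 3) (by norm_num) hPpos.le ?_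
    rw [hP3]
    exact_mod_cast E_cubed c
  have hx2 : (E t : ℝ) ^ 2 ≤ P := by
    have h1 : E t * E t ≤ E c := le_trans (Nat.mul_le_mul_left _ hxy) hmul
    have h2 : (E t : ℝ) * E t ≤ (E c : ℝ) := by exact_mod_cast h1
    nlinarith
  have hx_half : 2 * (E t : ℝ) ≤ (n : ℝ) := by
    have h1 : (2 * (E t : ℝ)) ^ 2 ≤ (n : ℝ) ^ 2 := by nlinarith
    exact le_of_pow_le_pow_left₀ (by norm_num) hNpos.le h1
  have hkey : (n : ℝ) * (E t : ℝ) - (E t : ℝ) ^ 2 ≤ P := by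
    have hyge : (n : ℝ) - (E t : ℝ) ≤ (E (c - t) : ℝ) := by
      have : (n : ℝ) ≤ (E t : ℝ) + (E (c - t) : ℝ) := by exact_mod_cast ht2
      linarith
    have h1 : (E t : ℝ) * ((n : ℝ) - (E t : ℝ)) ≤ (E t : ℝ) * (E (c - t) : ℝ) :=
      mul_le_mul_of_nonneg_left hyge (by positivity)
    have h2 : (E t : ℝ) * (E (c - t) : ℝ) ≤ (E c : ℝ) := by exact_mod_cast hmul
    nlinarith
  -- conclusion
  have hN2 : ((n : ℝ) ^ 2) ≠ 0 := by positivity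
  have hsqle : (n : ℝ) * Real.sqrt (1 - 4 / (n : ℝ) ^ 2 * P) ≤ (n : ℝ) - 2 * (E t : ℝ) := by
    have h1 : (n : ℝ) * Real.sqrt (1 - 4 / (n : ℝ) ^ 2 * P)
        = Real.sqrt ((n : ℝ) ^ 2 * (1 - 4 / (n : ℝ) ^ 2 * P)) := by
      rw [Real.sqrt_mul (sq_nonneg _), Real.sqrt_sq hNpos.le]
    have heq : (n : ℝ) ^ 2 * (1 - 4 / (n : ℝ) ^ 2 * P) = (n : ℝ) ^ 2 - 4 * P := by
      field_simp
    have h2 : (n : ℝ) ^ 2 * (1 - 4 / (n : ℝ) ^ 2 * P) ≤ ((n : ℝ) - 2 * (E t : ℝ)) ^ 2 := by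
      rw [heq]; nlinarith
    rw [h1]
    calc Real.sqrt ((n : ℝ) ^ 2 * (1 - 4 / (n : ℝ) ^ 2 * P))
        ≤ Real.sqrt (((n : ℝ) - 2 * (E t : ℝ)) ^ 2) := Real.sqrt_le_sqrt h2
      _ = (n : ℝ) - 2 * (E t : ℝ) := Real.sqrt_sq (by linarith)
  show (E t : ℝ) ≤ ((n : ℝ) / 2) * (1 - Real.sqrt (1 - 4 / (n : ℝ) ^ 2 * P))
  have hs0 : 0 ≤ Real.sqrt (1 - 4 / (n : ℝ) ^ 2 * P) := Real.sqrt_nonneg _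
  linarith
end

section
/- Let b ≥ 2 be an integer. For every integer ℓ ≥ 1, the sum of 3^(‖n‖/3) over all integers n with b^(ℓ−1) ≤ n < b^ℓ (i.e. all n with exactly ℓ digits in base b) satisfies Σ_{b^(ℓ−1) ≤ n < b^ℓ} 3^(‖n‖/3) ≤ (Σ_{r=1}^{b−1} 3^(‖r‖/3)) · (Σ_{d=0}^{b−1} 3^(D(b,d)/3))^(ℓ−1), where the powers of 3 are real powers. -/
/-- The digit cost `D b r`: the least `c` such that `‖b·n + r‖ ≤ ‖n‖ + c` for
every positive integer `n`. -/
noncomputable def D (b r : ℕ) : ℕ :=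
  sInf {c : ℕ | ∀ n : ℕ, 1 ≤ n → cpx (b * n + r) ≤ cpx n + c}

/-! Write an `(m+2)`-digit number as `b * q + d` with `q` an `(m+1)`-digit number and `d` a digit.
Since `‖b q + d‖ ≤ ‖q‖ + D(b,d)` and `x ↦ 3^(x/3)` turns sums into products, the sum over
`(m+2)`-digit numbers is at most the sum over `(m+1)`-digit numbers times `∑_d 3^(D(b,d)/3)`;
induct on the number of digits. -/

open Finset

lemma HasCpx.pos {n k : ℕ} (h : HasCpx n k) : 0 < n := by
  induction h with
  | one => exact Nat.one_pos
  | add _ _ ha _ => omega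
  | mul _ _ ha hb => exact Nat.mul_pos ha hb

lemma HasCpx.self {n : ℕ} (hn : n ≠ 0) : HasCpx n n := by
  induction n with
  | zero => exact absurd rfl hn
  | succ m ih =>
    rcases eq_or_ne m 0 with rfl | hm
    · exact HasCpx.one
    · exact (ih hm).add HasCpx.one

lemma hasCpx_cpx {n : ℕ} (hn : n ≠ 0) : HasCpx n (cpx n) :=
  Nat.sInf_mem ⟨n, HasCpx.self hn⟩

lemma cpx_zero : cpx 0 = 0 :=
  Nat.sInf_eq_zero.2 <| .inr <| Set.eq_empty_of_forall_notMem fun _ h => lt_irrefl 0 h.pos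

lemma cpx_add_le_s15 (m n : ℕ) : cpx (m + n) ≤ cpx m + cpx n := by
  rcases eq_or_ne m 0 with rfl | hm
  · simp [cpx_zero]
  rcases eq_or_ne n 0 with rfl | hn
  · simp [cpx_zero]
  exact Nat.sInf_le ((hasCpx_cpx hm).add (hasCpx_cpx hn))

lemma cpx_mul_le_s15 (m n : ℕ) : cpx (m * n) ≤ cpx m + cpx n := by
  rcases eq_or_ne m 0 with rfl | hm
  · simp [cpx_zero]
  rcases eq_or_ne n 0 with rfl | hn
  · simp [cpx_zero]
  exact Nat.sInf_le ((hasCpx_cpx hm).mul (hasCpx_cpx hn))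

lemma cpx_mul_add_le (b d : ℕ) {n : ℕ} (hn : 1 ≤ n) : cpx (b * n + d) ≤ cpx n + D b d := by
  refine Nat.sInf_mem (s := {c | ∀ n, 1 ≤ n → cpx (b * n + d) ≤ cpx n + c})
    ⟨cpx b + cpx d, fun m _ => ?_⟩ n hn
  have := cpx_add_le_s15 (b * m) d
  have := cpx_mul_le_s15 b m
  omega

lemma sum_Ico_mul_eq_sum_sum {M : Type*} [AddCommMonoid M] (f : ℕ → M) (b : ℕ) {a c : ℕ}
    (hac : a ≤ c) :
    ∑ n ∈ Ico (b * a) (b * c), f n = ∑ q ∈ Ico a c, ∑ d ∈ range b, f (b * q + d) := by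
  induction c, hac using Nat.le_induction with
  | base => simp
  | succ c hac ih =>
    rw [sum_Ico_succ_top hac, ← ih, mul_add_one,
      ← sum_Ico_consecutive _ (Nat.mul_le_mul_left b hac) (Nat.le_add_right _ _),
      sum_Ico_eq_sum_range f (b * c), Nat.add_sub_cancel_left]

lemma three_rpow_div_three_le_mul {k m n : ℕ} (h : k ≤ m + n) :
    (3 : ℝ) ^ ((k : ℝ) / 3) ≤ 3 ^ ((m : ℝ) / 3) * 3 ^ ((n : ℝ) / 3) := by
  rw [← Real.rpow_add three_pos, ← add_div]
  gcongr
  · norm_num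
  · exact_mod_cast h

lemma sum_rpow_cpx_Ico_mul_le (b : ℕ) {a c : ℕ} (ha : 1 ≤ a) (hac : a ≤ c) :
    ∑ n ∈ Ico (b * a) (b * c), (3 : ℝ) ^ ((cpx n : ℝ) / 3) ≤
      (∑ q ∈ Ico a c, (3 : ℝ) ^ ((cpx q : ℝ) / 3)) *
        ∑ d ∈ range b, (3 : ℝ) ^ ((D b d : ℝ) / 3) := by
  rw [sum_Ico_mul_eq_sum_sum _ b hac, sum_mul]
  refine sum_le_sum fun q hq => ?_
  rw [mul_sum]
  exact sum_le_sum fun d _ =>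
    three_rpow_div_three_le_mul (cpx_mul_add_le b d (ha.trans (mem_Ico.1 hq).1))

lemma sum_rpow_cpx_Ico_pow_le {b : ℕ} (hb : 0 < b) (m : ℕ) :
    ∑ n ∈ Ico (b ^ m) (b ^ (m + 1)), (3 : ℝ) ^ ((cpx n : ℝ) / 3) ≤
      (∑ r ∈ Icc 1 (b - 1), (3 : ℝ) ^ ((cpx r : ℝ) / 3)) *
        (∑ d ∈ range b, (3 : ℝ) ^ ((D b d : ℝ) / 3)) ^ m := by
  induction m with
  | zero =>
    -- `Icc 1 (b - 1)` and `Ico 1 b` are definitionally equal in `ℕ`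
    simp only [zero_add, pow_zero, pow_one, mul_one]; exact le_rfl
  | succ m ih =>
    have hstep := sum_rpow_cpx_Ico_mul_le b (Nat.one_le_pow m b hb)
      (Nat.pow_le_pow_right hb m.le_succ)
    rw [← pow_succ', ← pow_succ'] at hstep
    calc _ ≤ _ := hstep
      _ ≤ ((∑ r ∈ Icc 1 (b - 1), (3 : ℝ) ^ ((cpx r : ℝ) / 3)) *
            (∑ d ∈ range b, (3 : ℝ) ^ ((D b d : ℝ) / 3)) ^ m) *
          ∑ d ∈ range b, (3 : ℝ) ^ ((D b d : ℝ) / 3) := by gcongr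
      _ = _ := by ring

/-- For `b ≥ 2` and `ℓ ≥ 1`, the sum of `3^(‖n‖/3)` over the integers `n` with
exactly `ℓ` digits in base `b` is at most
`(∑_{r=1}^{b-1} 3^(‖r‖/3)) · (∑_{d=0}^{b-1} 3^(D(b,d)/3))^(ℓ-1)`. -/
theorem sum_rpow_digits_le (b ℓ : ℕ) (hb : 2 ≤ b) (hℓ : 1 ≤ ℓ) :
    ∑ n ∈ Finset.Ico (b ^ (ℓ - 1)) (b ^ ℓ), (3 : ℝ) ^ ((cpx n : ℝ) / 3) ≤
      (∑ r ∈ Finset.Icc 1 (b - 1), (3 : ℝ) ^ ((cpx r : ℝ) / 3)) *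
        (∑ d ∈ Finset.range b, (3 : ℝ) ^ ((D b d : ℝ) / 3)) ^ (ℓ - 1) := by
  obtain ⟨m, rfl⟩ : ∃ m, ℓ = m + 1 := ⟨ℓ - 1, by omega⟩
  simpa using sum_rpow_cpx_Ico_pow_le (by omega : 0 < b) m
end
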